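/- Chu's bibasic symmetric transformation: Let $n \ge 0$ be an integer and let $p, q, a, b, c, A, B, C$ be nonzero complex numbers such that all factors occurring in denominators below are nonzero. Then $\sum_{k=0}^{n} \frac{(1-ap^{2k})\,(a;p)_k (b;p)_k (c;p)_k (a/(bc);p)_k \, (C/(Aq^n);q)_k (1/(BCq^n);q)_k (B/(Aq^n);q)_k (q^{-n};q)_k}{(1-a)\,(p;p)_k (ap/b;p)_k (ap/c;p)_k (bcp;p)_k \, (1/(Cq^n);q)_k (BC/(Aq^n);q)_k (1/(Bq^n);q)_k (1/(Aq^n);q)_k} p^k = \frac{(ap,bp,cp,ap/(bc);p)_n \, (q,Aq/B,Aq/C,BCq;q)_n}{(p,ap/b,ap/c,bcp;p)_n \, (Aq,Bq,Cq,Aq/(BC);q)_n} \sum_{k=0}^{n} \frac{(1-Aq^{2k})\,(A;q)_k (B;q)_k (C;q)_k (A/(BC);q)_k \, (c/(ap^n);p)_k (1/(bcp^n);p)_k (b/(ap^n);p)_k (p^{-n};p)_k}{(1-A)\,(q;q)_k (Aq/B;q)_k (Aq/C;q)_k (BCq;q)_k \, (1/(cp^n);p)_k (bc/(ap^n);p)_k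 (1/(bp^n);p)_k (1/(ap^n);p)_k} q^k$. -/

import Mathlib

/-!
Let `W_k` be the very-well-poised summand in base `x` and `A_m` the ratio
`(αx, βx, γx, αx/(βγ); x)_m / (x, αx/β, αx/γ, βγx; x)_m`. The summand telescopes:
`W_0 + ⋯ + W_m = A_m`. The ratio `A` is balanced (its numerator and denominator parameters have
the same product), so reflecting `k ↦ n - k` gives `A_{n-k} = A_n R_k`, where `R_k` is the factor
in the other base that accompanies the summand on the opposite side. Multiplying the left side by
`A^q_n` turns it into `∑_k W^p_k A^q_{n-k} = ∑_{i+j ≤ n} W^p_i W^q_j`, which is symmetric in the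
two bases; the right side multiplied by `A^q_n` is the same double sum read the other way.
-/

set_option autoImplicit false

/-- The q-shifted factorial `(a;q)_n = ∏_{j=0}^{n-1} (1 - a q^j)`. -/
noncomputable def qPoch (q a : ℂ) (n : ℕ) : ℂ := ∏ j ∈ Finset.range n, (1 - a * q ^ j)

open Finset

theorem sum_range_mul_sum_range_sub_comm {R : Type*} [CommSemiring R] (f g : ℕ → R) (n : ℕ) :
    ∑ i ∈ range n, f i * ∑ j ∈ range (n - i), g j =
      ∑ i ∈ range n, g i * ∑ j ∈ range (n - i), f j := by
  simp only [mul_sum, ← sum_range_diag_flip n (fun i j => f i * g j),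
    ← sum_range_diag_flip n (fun i j => g i * f j)]
  refine sum_congr rfl fun m _ => ?_
  rw [← Nat.sum_antidiagonal_eq_sum_range_succ (fun i j => f i * g j),
    ← Nat.sum_antidiagonal_eq_sum_range_succ (fun i j => g i * f j), ← Nat.sum_antidiagonal_swap]
  simp [mul_comm]

section QPoch

variable (x u : ℂ)

@[simp] theorem qPoch_zero : qPoch x u 0 = 1 := prod_range_zero _

theorem qPoch_succ (k : ℕ) : qPoch x u (k + 1) = qPoch x u k * (1 - u * x ^ k) :=
  prod_range_succ _ _

theorem qPoch_succ' (k : ℕ) : qPoch x u (k + 1) = (1 - u) * qPoch x (u * x) k := by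
  simp only [qPoch, prod_range_succ', pow_zero, mul_one, pow_succ', mul_assoc]
  rw [mul_comm]

theorem qPoch_add (m k : ℕ) : qPoch x u (m + k) = qPoch x u m * qPoch x (u * x ^ m) k := by
  simp only [qPoch, prod_range_add, pow_add, mul_assoc]

variable {x u}

theorem qPoch_eq_mul_qPoch_reflect {v : ℂ} {n j : ℕ} (hx : x ≠ 0) (huv : u * v * x ^ n = x)
    (hj : j ≤ n) :
    qPoch x u n =
      qPoch x u (n - j) * ((-u) ^ j * ∏ i ∈ range j, x ^ (n - 1 - i)) * qPoch x v j := by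
  obtain ⟨m, rfl⟩ : ∃ m, n = m + j := ⟨n - j, by omega⟩
  rw [Nat.add_sub_cancel, qPoch_add, mul_assoc]
  congr 1
  rw [qPoch, qPoch, ← prod_range_reflect, show (-u) ^ j = ∏ _i ∈ range j, -u by simp,
    ← prod_mul_distrib, ← prod_mul_distrib]
  refine prod_congr rfl fun i hmem => ?_
  have hi : i < j := mem_range.mp hmem
  have hsplit : x ^ (m + j - 1 - i) = x ^ m * x ^ (j - 1 - i) := by
    rw [← pow_add]; congr 1; omega
  have hone : u * v * x ^ (m + j - 1 - i) * x ^ i = 1 := by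
    refine mul_right_cancel₀ hx ?_
    rw [one_mul, mul_assoc, mul_assoc, ← pow_succ, ← pow_add, ← huv]
    congr 2; omega
  -- `1 - u x^(m+j-1-i) = -u x^(m+j-1-i) (1 - v x^i)` because `u v x^(m+j-1) = 1`
  linear_combination u * hsplit - hone

end QPoch

noncomputable def qRatio {ι : Type*} [Fintype ι] (x : ℂ) (u w : ι → ℂ) (k : ℕ) : ℂ :=
  (∏ i, qPoch x (u i) k) / ∏ i, qPoch x (w i) k

theorem qRatio_mul_qRatio_reflect {ι : Type*} [Fintype ι] {x : ℂ} {u w u' w' : ι → ℂ} {n j : ℕ}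
    (hx : x ≠ 0) (hbal : ∏ i, u i = ∏ i, w i) (hu : ∀ i, u i * u' i * x ^ n = x)
    (hw : ∀ i, w i * w' i * x ^ n = x) (hw_ne : ∏ i, qPoch x (w i) n ≠ 0)
    (hu'_ne : ∏ i, qPoch x (u' i) j ≠ 0) (hj : j ≤ n) :
    qRatio x u w n * qRatio x w' u' j = qRatio x u w (n - j) := by
  have reflect (v v' : ι → ℂ) (hv : ∀ i, v i * v' i * x ^ n = x) :
      ∏ i, qPoch x (v i) n = (∏ i, qPoch x (v i) (n - j)) *
        ((∏ i, -v i) ^ j * (∏ i ∈ range j, x ^ (n - 1 - i)) ^ Fintype.card ι) *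
          ∏ i, qPoch x (v' i) j := by
    simp only [qPoch_eq_mul_qPoch_reflect hx (hv _) hj, prod_mul_distrib, prod_pow, prod_const,
      card_univ]
  have hneg : ∏ i, -u i = ∏ i, -w i := by simp only [prod_neg, hbal]
  rw [reflect w w' hw] at hw_ne
  unfold qRatio
  rw [reflect u u' hu, reflect w w' hw, hneg, div_mul_div_comm,
    div_eq_div_iff (mul_ne_zero hw_ne hu'_ne) (left_ne_zero_of_mul (left_ne_zero_of_mul hw_ne))]
  ring

theorem prod_qPoch_succ {ι : Type*} [Fintype ι] (x : ℂ) (u : ι → ℂ) (k : ℕ) :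
    ∏ i, qPoch x (u i) (k + 1) = (∏ i, qPoch x (u i) k) * ∏ i, (1 - u i * x ^ k) := by
  simp only [qPoch_succ, prod_mul_distrib]

theorem prod_qPoch_succ' {ι : Type*} [Fintype ι] (x : ℂ) (u : ι → ℂ) (k : ℕ) :
    ∏ i, qPoch x (u i) (k + 1) = (∏ i, (1 - u i)) * ∏ i, qPoch x (u i * x) k := by
  simp only [qPoch_succ', prod_mul_distrib]

theorem qRatio_succ {ι : Type*} [Fintype ι] (x : ℂ) (u w : ι → ℂ) (k : ℕ) :
    qRatio x u w (k + 1) =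
      qRatio x u w k * ((∏ i, (1 - u i * x ^ k)) / ∏ i, (1 - w i * x ^ k)) := by
  rw [qRatio, qRatio, prod_qPoch_succ, prod_qPoch_succ, div_mul_div_comm]

section VeryWellPoised

variable (x α β γ : ℂ)

noncomputable def vwpNum : Fin 4 → ℂ := ![α * x, β * x, γ * x, α * x / (β * γ)]

noncomputable def vwpDen : Fin 4 → ℂ := ![x, α * x / β, α * x / γ, β * γ * x]

-- `vwpRevNum i = x / (vwpDen i * x ^ n)` and `vwpRevDen i = x / (vwpNum i * x ^ n)`,
-- simplified to the shape they have in the theorem.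
noncomputable def vwpRevNum (n : ℕ) : Fin 4 → ℂ :=
  ![x ^ (-(n : ℤ)), β / (α * x ^ n), γ / (α * x ^ n), 1 / (β * γ * x ^ n)]

noncomputable def vwpRevDen (n : ℕ) : Fin 4 → ℂ :=
  ![1 / (α * x ^ n), 1 / (β * x ^ n), 1 / (γ * x ^ n), β * γ / (α * x ^ n)]

noncomputable def vwpTerm (k : ℕ) : ℂ :=
  (1 - α * x ^ (2 * k)) / (1 - α) * qRatio x ![α, β, γ, α / (β * γ)] (vwpDen x α β γ) k * x ^ k

variable {x α β γ}

theorem vwp_step_sub (hβ : β ≠ 0) (hγ : γ ≠ 0) (t : ℂ) :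
    (1 - α * t) * (1 - β * t) * (1 - γ * t) * (1 - α * t / (β * γ)) -
        (1 - t) * (1 - α * t / β) * (1 - α * t / γ) * (1 - β * γ * t) =
      (1 - α * t ^ 2) * (1 - β) * (1 - γ) * (1 - α / (β * γ)) * t := by
  field_simp
  ring

theorem vwpTerm_succ (hβ : β ≠ 0) (hγ : γ ≠ 0) (h1α : 1 - α ≠ 0) {k : ℕ}
    (hD : ∏ i, qPoch x (vwpDen x α β γ i) (k + 1) ≠ 0) :
    vwpTerm x α β γ (k + 1) =
      qRatio x (vwpNum x α β γ) (vwpDen x α β γ) (k + 1) -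
        qRatio x (vwpNum x α β γ) (vwpDen x α β γ) k := by
  rw [prod_qPoch_succ] at hD
  have hDs := right_ne_zero_of_mul hD
  obtain ⟨c, hc⟩ : ∃ c, c = (1 - α * x ^ (2 * (k + 1))) * (1 - β) * (1 - γ) * (1 - α / (β * γ)) *
      x ^ (k + 1) := ⟨_, rfl⟩
  have hstep : ∏ i, (1 - vwpNum x α β γ i * x ^ k) - ∏ i, (1 - vwpDen x α β γ i * x ^ k) = c := by
    simp only [hc, vwpNum, vwpDen, Fin.prod_univ_four, Matrix.cons_val]
    linear_combination vwp_step_sub hβ hγ (x ^ (k + 1))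
  have hshift (i : Fin 4) : ![α, β, γ, α / (β * γ)] i * x = vwpNum x α β γ i := by
    fin_cases i <;> simp [vwpNum, div_mul_eq_mul_div]
  have hW : vwpTerm x α β γ (k + 1) =
      qRatio x (vwpNum x α β γ) (vwpDen x α β γ) k * (c / ∏ i, (1 - vwpDen x α β γ i * x ^ k)) := by
    have hfirst : ∏ i, (1 - ![α, β, γ, α / (β * γ)] i) =
        (1 - α) * (1 - β) * (1 - γ) * (1 - α / (β * γ)) := by
      simp [Fin.prod_univ_four]
    rw [vwpTerm, qRatio, qRatio, prod_qPoch_succ', prod_qPoch_succ, hfirst, hc]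
    simp only [hshift]
    generalize ∏ i, (1 - vwpDen x α β γ i * x ^ k) = Ds at hDs ⊢
    field_simp
  rw [hW, qRatio_succ, ← hstep, sub_div, div_self hDs]
  ring

theorem sum_vwpTerm (hβ : β ≠ 0) (hγ : γ ≠ 0) (h1α : 1 - α ≠ 0) {n : ℕ}
    (hD : ∀ k ≤ n, ∏ i, qPoch x (vwpDen x α β γ i) k ≠ 0) :
    ∑ k ∈ range (n + 1), vwpTerm x α β γ k = qRatio x (vwpNum x α β γ) (vwpDen x α β γ) n := by
  induction n with
  | zero => simp [vwpTerm, qRatio, h1α]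
  | succ n ih =>
    rw [sum_range_succ, ih fun k hk => hD k (by omega), vwpTerm_succ hβ hγ h1α (hD _ le_rfl)]
    ring

theorem qRatio_vwp_mul_qRatio_vwpRev (hx : x ≠ 0) (hα : α ≠ 0) (hβ : β ≠ 0) (hγ : γ ≠ 0)
    {n j : ℕ} (hD : ∏ i, qPoch x (vwpDen x α β γ i) n ≠ 0)
    (hR : ∏ i, qPoch x (vwpRevDen x α β γ n i) j ≠ 0) (hj : j ≤ n) :
    qRatio x (vwpNum x α β γ) (vwpDen x α β γ) n *
        qRatio x (vwpRevNum x α β γ n) (vwpRevDen x α β γ n) j =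
      qRatio x (vwpNum x α β γ) (vwpDen x α β γ) (n - j) := by
  refine qRatio_mul_qRatio_reflect hx ?_ (fun i => ?_) (fun i => ?_) hD hR hj
  · simp only [vwpNum, vwpDen, Fin.prod_univ_four, Matrix.cons_val]
    field_simp
  all_goals
    fin_cases i <;> simp [vwpNum, vwpDen, vwpRevNum, vwpRevDen] <;> field_simp

theorem qRatio_vwp_mul_sum_mul_qRatio_vwpRev (hx : x ≠ 0) (hα : α ≠ 0) (hβ : β ≠ 0) (hγ : γ ≠ 0)
    (h1α : 1 - α ≠ 0) {n : ℕ} (hD : ∀ k ≤ n, ∏ i, qPoch x (vwpDen x α β γ i) k ≠ 0)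
    (hR : ∀ k ≤ n, ∏ i, qPoch x (vwpRevDen x α β γ n i) k ≠ 0) (f : ℕ → ℂ) :
    qRatio x (vwpNum x α β γ) (vwpDen x α β γ) n *
        ∑ k ∈ range (n + 1), f k * qRatio x (vwpRevNum x α β γ n) (vwpRevDen x α β γ n) k =
      ∑ k ∈ range (n + 1), f k * ∑ j ∈ range (n + 1 - k), vwpTerm x α β γ j := by
  rw [mul_sum]
  refine sum_congr rfl fun k hk => ?_
  have hk : k ≤ n := Nat.lt_succ_iff.mp (mem_range.mp hk)
  rw [mul_left_comm, qRatio_vwp_mul_qRatio_vwpRev hx hα hβ hγ (hD n le_rfl) (hR k hk) hk,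
    Nat.sub_add_comm hk, sum_vwpTerm hβ hγ h1α fun i hi => hD i (by omega)]

end VeryWellPoised

theorem qRatio_mul_sum_vwpTerm_mul_qRatio_vwpRev_comm {n : ℕ} {p a b c q A B C : ℂ}
    (hp : p ≠ 0) (ha : a ≠ 0) (hb : b ≠ 0) (hc : c ≠ 0) (h1a : 1 - a ≠ 0)
    (hDp : ∀ k ≤ n, ∏ i, qPoch p (vwpDen p a b c i) k ≠ 0)
    (hRp : ∀ k ≤ n, ∏ i, qPoch p (vwpRevDen p a b c n i) k ≠ 0)
    (hq : q ≠ 0) (hA : A ≠ 0) (hB : B ≠ 0) (hC : C ≠ 0) (h1A : 1 - A ≠ 0)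
    (hDq : ∀ k ≤ n, ∏ i, qPoch q (vwpDen q A B C i) k ≠ 0)
    (hRq : ∀ k ≤ n, ∏ i, qPoch q (vwpRevDen q A B C n i) k ≠ 0) :
    qRatio q (vwpNum q A B C) (vwpDen q A B C) n *
        ∑ k ∈ range (n + 1),
          vwpTerm p a b c k * qRatio q (vwpRevNum q A B C n) (vwpRevDen q A B C n) k =
      qRatio p (vwpNum p a b c) (vwpDen p a b c) n *
        ∑ k ∈ range (n + 1),
          vwpTerm q A B C k * qRatio p (vwpRevNum p a b c n) (vwpRevDen p a b c n) k := by
  rw [qRatio_vwp_mul_sum_mul_qRatio_vwpRev hq hA hB hC h1A hDq hRq,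
    qRatio_vwp_mul_sum_mul_qRatio_vwpRev hp ha hb hc h1a hDp hRp, sum_range_mul_sum_range_sub_comm]

theorem chu_den_eq (x α β γ y α' β' γ' : ℂ) (n k : ℕ) :
    qPoch x x k * qPoch x (α * x / β) k * qPoch x (α * x / γ) k * qPoch x (β * γ * x) k *
        qPoch y (1 / (γ' * y ^ n)) k * qPoch y (β' * γ' / (α' * y ^ n)) k *
        qPoch y (1 / (β' * y ^ n)) k * qPoch y (1 / (α' * y ^ n)) k =
      (∏ i, qPoch x (vwpDen x α β γ i) k) * ∏ i, qPoch y (vwpRevDen y α' β' γ' n i) k := by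
  simp only [vwpDen, vwpRevDen, Fin.prod_univ_four, Matrix.cons_val]
  ring

theorem chu_summand_eq (x α β γ y α' β' γ' : ℂ) (n k : ℕ) :
    (1 - α * x ^ (2 * k)) *
        (qPoch x α k * qPoch x β k * qPoch x γ k * qPoch x (α / (β * γ)) k *
          qPoch y (γ' / (α' * y ^ n)) k * qPoch y (1 / (β' * γ' * y ^ n)) k *
          qPoch y (β' / (α' * y ^ n)) k * qPoch y (y ^ (-(n : ℤ))) k) * x ^ k /
        ((1 - α) *
          (qPoch x x k * qPoch x (α * x / β) k * qPoch x (α * x / γ) k * qPoch x (β * γ * x) k *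
            qPoch y (1 / (γ' * y ^ n)) k * qPoch y (β' * γ' / (α' * y ^ n)) k *
            qPoch y (1 / (β' * y ^ n)) k * qPoch y (1 / (α' * y ^ n)) k)) =
      vwpTerm x α β γ k * qRatio y (vwpRevNum y α' β' γ' n) (vwpRevDen y α' β' γ' n) k := by
  rw [chu_den_eq, ← div_div]
  simp only [vwpTerm, qRatio, vwpRevNum, vwpDen, vwpRevDen, Fin.prod_univ_four, Matrix.cons_val]
  ring

theorem chu_prefactor_den_eq (x α β γ y α' β' γ' : ℂ) (n : ℕ) :
    qPoch x x n * qPoch x (α * x / β) n * qPoch x (α * x / γ) n * qPoch x (β * γ * x) n *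
        qPoch y (α' * y) n * qPoch y (β' * y) n * qPoch y (γ' * y) n *
        qPoch y (α' * y / (β' * γ')) n =
      (∏ i, qPoch x (vwpDen x α β γ i) n) * ∏ i, qPoch y (vwpNum y α' β' γ' i) n := by
  simp only [vwpNum, vwpDen, Fin.prod_univ_four, Matrix.cons_val]
  ring

theorem chu_prefactor_eq (x α β γ y α' β' γ' : ℂ) (n : ℕ) :
    qPoch x (α * x) n * qPoch x (β * x) n * qPoch x (γ * x) n * qPoch x (α * x / (β * γ)) n *
        qPoch y y n * qPoch y (α' * y / β') n * qPoch y (α' * y / γ') n * qPoch y (β' * γ' * y) n /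
      (qPoch x x n * qPoch x (α * x / β) n * qPoch x (α * x / γ) n * qPoch x (β * γ * x) n *
        qPoch y (α' * y) n * qPoch y (β' * y) n * qPoch y (γ' * y) n *
        qPoch y (α' * y / (β' * γ')) n) =
      qRatio x (vwpNum x α β γ) (vwpDen x α β γ) n /
        qRatio y (vwpNum y α' β' γ') (vwpDen y α' β' γ') n := by
  rw [chu_prefactor_den_eq, qRatio, qRatio, div_div_div_eq]
  simp only [vwpNum, vwpDen, Fin.prod_univ_four, Matrix.cons_val]
  ring

/-- Chu's bibasic symmetric transformation. -/
theorem chu_bibasic_symmetric_transformation (n : ℕ) (p q a b c A B C : ℂ) (hp : p ≠ 0)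
    (hq : q ≠ 0) (ha : a ≠ 0) (hb : b ≠ 0) (hc : c ≠ 0) (hA : A ≠ 0) (hB : B ≠ 0) (hC : C ≠ 0)
    (h1a : 1 - a ≠ 0) (h1A : 1 - A ≠ 0)
    (hdenL : ∀ k ≤ n,
      qPoch p p k * qPoch p (a * p / b) k * qPoch p (a * p / c) k * qPoch p (b * c * p) k *
        qPoch q (1 / (C * q ^ n)) k * qPoch q (B * C / (A * q ^ n)) k *
        qPoch q (1 / (B * q ^ n)) k * qPoch q (1 / (A * q ^ n)) k ≠ 0)
    (hdenR : ∀ k ≤ n,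
      qPoch q q k * qPoch q (A * q / B) k * qPoch q (A * q / C) k * qPoch q (B * C * q) k *
        qPoch p (1 / (c * p ^ n)) k * qPoch p (b * c / (a * p ^ n)) k *
        qPoch p (1 / (b * p ^ n)) k * qPoch p (1 / (a * p ^ n)) k ≠ 0)
    (hpre : qPoch p p n * qPoch p (a * p / b) n * qPoch p (a * p / c) n * qPoch p (b * c * p) n *
        qPoch q (A * q) n * qPoch q (B * q) n * qPoch q (C * q) n *
        qPoch q (A * q / (B * C)) n ≠ 0) :
    ∑ k ∈ Finset.range (n + 1),
      (1 - a * p ^ (2 * k)) *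
        (qPoch p a k * qPoch p b k * qPoch p c k * qPoch p (a / (b * c)) k *
          qPoch q (C / (A * q ^ n)) k * qPoch q (1 / (B * C * q ^ n)) k *
          qPoch q (B / (A * q ^ n)) k * qPoch q (q ^ (-(n : ℤ))) k) * p ^ k /
        ((1 - a) *
          (qPoch p p k * qPoch p (a * p / b) k * qPoch p (a * p / c) k * qPoch p (b * c * p) k *
            qPoch q (1 / (C * q ^ n)) k * qPoch q (B * C / (A * q ^ n)) k *
            qPoch q (1 / (B * q ^ n)) k * qPoch q (1 / (A * q ^ n)) k))
    = qPoch p (a * p) n * qPoch p (b * p) n * qPoch p (c * p) n * qPoch p (a * p / (b * c)) n *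
        qPoch q q n * qPoch q (A * q / B) n * qPoch q (A * q / C) n * qPoch q (B * C * q) n /
      (qPoch p p n * qPoch p (a * p / b) n * qPoch p (a * p / c) n * qPoch p (b * c * p) n *
        qPoch q (A * q) n * qPoch q (B * q) n * qPoch q (C * q) n *
        qPoch q (A * q / (B * C)) n) *
      ∑ k ∈ Finset.range (n + 1),
        (1 - A * q ^ (2 * k)) *
          (qPoch q A k * qPoch q B k * qPoch q C k * qPoch q (A / (B * C)) k *
            qPoch p (c / (a * p ^ n)) k * qPoch p (1 / (b * c * p ^ n)) k *
            qPoch p (b / (a * p ^ n)) k * qPoch p (p ^ (-(n : ℤ))) k) * q ^ k /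
          ((1 - A) *
            (qPoch q q k * qPoch q (A * q / B) k * qPoch q (A * q / C) k * qPoch q (B * C * q) k *
              qPoch p (1 / (c * p ^ n)) k * qPoch p (b * c / (a * p ^ n)) k *
              qPoch p (1 / (b * p ^ n)) k * qPoch p (1 / (a * p ^ n)) k)) := by
  simp only [chu_den_eq, mul_ne_zero_iff] at hdenL hdenR
  rw [chu_prefactor_den_eq] at hpre
  have hRq : qRatio q (vwpNum q A B C) (vwpDen q A B C) n ≠ 0 :=
    div_ne_zero (right_ne_zero_of_mul hpre) (hdenR n le_rfl).1
  have key := qRatio_mul_sum_vwpTerm_mul_qRatio_vwpRev_comm hp ha hb hc h1a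
    (fun k hk => (hdenL k hk).1) (fun k hk => (hdenR k hk).2) hq hA hB hC h1A
    (fun k hk => (hdenR k hk).1) (fun k hk => (hdenL k hk).2)
  simp only [chu_summand_eq]
  rw [chu_prefactor_eq, div_mul_eq_mul_div, eq_div_iff hRq, mul_comm, key]
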